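/- arXiv:1209.5011 — 2 statements merged into one kernel-verified Lean document; each statement's English description precedes it below -/
import Mathlib

section
/- Let A be an n×n matrix and B an n×s matrix over ℝ≥0∞, and let A* := ∑' k, A^k. Then X = A*·B is the least solution of the matrix Bellman equation X = A·X + B: it satisfies A·(A*·B) + B = A*·B, and for every n×s matrix Y with Y = A·Y + B one has A*·B ≤ Y entrywise. -/
/-!
The series `A* B = ∑ₖ Aᵏ B` solves `X = A X + B` because multiplying it by `A` shifts the series
by one index. It lies below every `Y` with `A Y + B ≤ Y`, since by induction on `N` so does each
partial sum `∑_{k<N} Aᵏ B`, and over `ℝ≥0∞` a series is the supremum of its partial sums.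
-/

open scoped ENNReal
open Finset

namespace Matrix

variable {α l m n R : Type*}

theorem tsum_apply [AddCommMonoid R] [TopologicalSpace R] [T2Space R] {f : α → Matrix m n R}
    (hf : Summable f) (i : m) (j : n) : (∑' a, f a) i j = ∑' a, f a i j := by
  rw [← _root_.tsum_apply (Pi.summable.mp hf i)]
  exact congrFun (_root_.tsum_apply hf) j

theorem summable_ennreal (f : α → Matrix m n ℝ≥0∞) : Summable f :=
  Pi.summable.mpr fun _ => Pi.summable.mpr fun _ => ENNReal.summable

variable [Fintype m]

theorem tsum_mul_ennreal (f : α → Matrix l m ℝ≥0∞) (B : Matrix m n ℝ≥0∞) :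
    (∑' a, f a) * B = ∑' a, f a * B := by
  ext i j
  simp only [mul_apply, tsum_apply (summable_ennreal _), ← ENNReal.tsum_mul_right]
  exact (Summable.tsum_finsetSum fun _ _ => ENNReal.summable).symm

theorem mul_tsum_ennreal (A : Matrix l m ℝ≥0∞) (f : α → Matrix m n ℝ≥0∞) :
    A * ∑' a, f a = ∑' a, A * f a := by
  ext i j
  simp only [mul_apply, tsum_apply (summable_ennreal _), ← ENNReal.tsum_mul_left]
  exact (Summable.tsum_finsetSum fun _ _ => ENNReal.summable).symm

variable [DecidableEq m]

theorem mul_tsum_pow_add_one_ennreal (A : Matrix m m ℝ≥0∞) :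
    A * ∑' k : ℕ, A ^ k + 1 = ∑' k : ℕ, A ^ k := by
  rw [mul_tsum_ennreal, tsum_eq_zero_add' (f := (A ^ ·)) (summable_ennreal _), pow_zero, add_comm]
  simp only [pow_succ']

theorem mul_tsum_pow_mul_add_ennreal (A : Matrix m m ℝ≥0∞) (B : Matrix m n ℝ≥0∞) :
    A * ((∑' k : ℕ, A ^ k) * B) + B = (∑' k : ℕ, A ^ k) * B := by
  conv_rhs => rw [← mul_tsum_pow_add_one_ennreal A]
  rw [Matrix.add_mul, Matrix.one_mul, Matrix.mul_assoc]

theorem geom_sum_mul_apply_le [Semiring R] [PartialOrder R] [CanonicallyOrderedAdd R]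
    {A : Matrix m m R} {B Y : Matrix m n R} (hY : ∀ i j, (A * Y + B) i j ≤ Y i j) (N : ℕ)
    (i : m) (j : n) : ((∑ k ∈ range N, A ^ k) * B) i j ≤ Y i j := by
  induction N generalizing i with
  | zero => simp
  | succ N ih =>
    calc ((∑ k ∈ range (N + 1), A ^ k) * B) i j
        = (A * ((∑ k ∈ range N, A ^ k) * B)) i j + B i j := by
          rw [geom_sum_succ, Matrix.add_mul, Matrix.one_mul, Matrix.mul_assoc, add_apply]
      _ ≤ (A * Y) i j + B i j := by
          simp only [mul_apply]
          gcongr with l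
          exact ih l
      _ ≤ Y i j := hY i j

theorem tsum_pow_mul_apply_le_ennreal {A : Matrix m m ℝ≥0∞} {B Y : Matrix m n ℝ≥0∞}
    (hY : ∀ i j, (A * Y + B) i j ≤ Y i j) (i : m) (j : n) :
    ((∑' k : ℕ, A ^ k) * B) i j ≤ Y i j := by
  rw [tsum_mul_ennreal, tsum_apply (summable_ennreal _)]
  refine ENNReal.tsum_le_of_sum_range_le fun N => ?_
  rw [← sum_apply, ← Matrix.sum_mul]
  exact geom_sum_mul_apply_le hY N i j

end Matrix

/-- For an `n × n` matrix `A` and an `n × s` matrix `B` over `ℝ≥0∞`,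
`X = A* * B` (with `A* = ∑' k, A ^ k`) is the least solution, in the
entrywise order, of the matrix Bellman equation `X = A * X + B`. -/
theorem matrix_bellman_least_solution (n s : ℕ)
    (A : Matrix (Fin n) (Fin n) ℝ≥0∞) (B : Matrix (Fin n) (Fin s) ℝ≥0∞) :
    A * ((∑' k : ℕ, A ^ k) * B) + B = (∑' k : ℕ, A ^ k) * B ∧
    ∀ Y : Matrix (Fin n) (Fin s) ℝ≥0∞, Y = A * Y + B →
      ∀ i j, ((∑' k : ℕ, A ^ k) * B) i j ≤ Y i j :=
  ⟨Matrix.mul_tsum_pow_mul_add_ennreal A B, fun _ hY =>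
    Matrix.tsum_pow_mul_apply_le_ennreal fun i j => (congrFun₂ hY i j).ge⟩
end

section
/- Let A and B be n×n matrices over ℝ≥0∞ and let the closure of a square matrix M over ℝ≥0∞ be M* := ∑' k, M^k. Then (A + B)* = (A*·B)*·A*. -/
open scoped ENNReal

/-- The closure of a square matrix over `ℝ≥0∞`. -/
noncomputable def matrixClosure {p : Type*} [Fintype p] [DecidableEq p]
    (M : Matrix p p ℝ≥0∞) : Matrix p p ℝ≥0∞ :=
  ∑' k : ℕ, M ^ k

/-!
Expanding powers of a sum, `(A + B)*` is the sum of the products of all words in `A` and `B`.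
Each such word factors uniquely as `(A^i₁ B) ⋯ (A^iₖ B) A^g`, and expanding `(A* B)* A*` in the
same way gives exactly the sum over these factorizations. Over `ℝ≥0∞` every series converges
and may be reindexed freely, so the two sums agree.
-/

namespace ENNReal

/- Multiplication on `ℝ≥0∞` is not continuous, so the library's lemmas on series in topological
semirings do not apply to these matrices; everything is reduced to entries instead. -/

variable {p X : Type*}

theorem matrix_tsum_apply (f : X → Matrix p p ℝ≥0∞) (i j : p) :
    (∑' x, f x) i j = ∑' x, f x i j :=
  (congrFun (tsum_apply (Pi.summable.2 fun _ ↦ Pi.summable.2 fun _ ↦ ENNReal.summable)) j).trans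
    ENNReal.tsum_apply

theorem matrix_tsum_prod {Y : Type*} (f : X × Y → Matrix p p ℝ≥0∞) :
    ∑' x, f x = ∑' a, ∑' b, f (a, b) := by
  ext i j
  simp only [matrix_tsum_apply]
  exact ENNReal.tsum_prod'

theorem matrix_tsum_sigma {β : X → Type*} (f : (Σ a, β a) → Matrix p p ℝ≥0∞) :
    ∑' x, f x = ∑' a, ∑' b, f ⟨a, b⟩ := by
  ext i j
  simp only [matrix_tsum_apply]
  exact ENNReal.tsum_sigma' _

variable [Fintype p]

theorem matrix_tsum_mul (f : X → Matrix p p ℝ≥0∞) (C : Matrix p p ℝ≥0∞) :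
    (∑' x, f x) * C = ∑' x, f x * C := by
  ext i j
  simp only [Matrix.mul_apply, matrix_tsum_apply, ← ENNReal.tsum_mul_right]
  exact (Summable.tsum_finsetSum fun _ _ ↦ ENNReal.summable).symm

theorem matrix_mul_tsum (C : Matrix p p ℝ≥0∞) (f : X → Matrix p p ℝ≥0∞) :
    C * (∑' x, f x) = ∑' x, C * f x := by
  ext i j
  simp only [Matrix.mul_apply, matrix_tsum_apply, ← ENNReal.tsum_mul_left]
  exact (Summable.tsum_finsetSum fun _ _ ↦ ENNReal.summable).symm

variable [DecidableEq p]

theorem matrix_tsum_pow (f : X → Matrix p p ℝ≥0∞) (k : ℕ) :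
    (∑' x, f x) ^ k = ∑' t : Fin k → X, (List.ofFn (f ∘ t)).prod := by
  induction k with
  | zero => simp
  | succ k ih =>
    rw [pow_succ', ih, ← (Fin.consEquiv fun _ ↦ X).tsum_eq, matrix_tsum_prod, matrix_tsum_mul]
    simp [matrix_mul_tsum, Fin.consEquiv, List.ofFn_succ, Function.comp_def]

theorem matrixClosure_tsum (f : X → Matrix p p ℝ≥0∞) :
    matrixClosure (∑' x, f x) = ∑' l : List X, (l.map f).prod := by
  simp only [matrixClosure, matrix_tsum_pow]
  rw [← matrix_tsum_sigma (f := fun t : Σ k, Fin k → X ↦ (List.ofFn (f ∘ t.2)).prod),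
    ← List.equivSigmaTuple.tsum_eq]
  simp [List.equivSigmaTuple, ← List.map_ofFn]

end ENNReal

section Gaps

open List

/-- `([i₁, …, iₖ], g)` encodes the word `false^i₁ true ⋯ false^iₖ true false^g`. -/
def wordOfGaps (x : List ℕ × ℕ) : List Bool :=
  x.1.flatMap (fun i ↦ replicate i false ++ [true]) ++ replicate x.2 false

def gapsOfWord : List Bool → List ℕ × ℕ
  | [] => ([], 0)
  | true :: w => (0 :: (gapsOfWord w).1, (gapsOfWord w).2)
  | false :: w =>
    match gapsOfWord w with
    | ([], g) => ([], g + 1)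
    | (i :: l, g) => ((i + 1) :: l, g)

theorem wordOfGaps_cons (i : ℕ) (l : List ℕ) (g : ℕ) :
    wordOfGaps (i :: l, g) = replicate i false ++ true :: wordOfGaps (l, g) := by
  simp [wordOfGaps]

theorem wordOfGaps_gapsOfWord : ∀ w, wordOfGaps (gapsOfWord w) = w
  | [] => rfl
  | true :: w => by
    simpa [gapsOfWord, wordOfGaps_cons] using wordOfGaps_gapsOfWord w
  | false :: w => by
    have ih := wordOfGaps_gapsOfWord w
    rcases h : gapsOfWord w with ⟨_ | ⟨i, l⟩, g⟩ <;>
      simp_all [gapsOfWord, wordOfGaps, replicate_succ]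

theorem gapsOfWord_replicate (g : ℕ) : gapsOfWord (replicate g false) = ([], g) := by
  induction g with
  | zero => rfl
  | succ g ih => rw [replicate_succ, gapsOfWord, ih]

theorem gapsOfWord_replicate_append_cons_true (i : ℕ) (w : List Bool) :
    gapsOfWord (replicate i false ++ true :: w) = (i :: (gapsOfWord w).1, (gapsOfWord w).2) := by
  induction i with
  | zero => rfl
  | succ i ih => rw [replicate_succ, cons_append, gapsOfWord, ih]

theorem gapsOfWord_wordOfGaps : ∀ x, gapsOfWord (wordOfGaps x) = x
  | ([], g) => by simpa [wordOfGaps] using gapsOfWord_replicate g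
  | (i :: l, g) => by
    rw [wordOfGaps_cons, gapsOfWord_replicate_append_cons_true, gapsOfWord_wordOfGaps (l, g)]

def gapsEquivWord : List ℕ × ℕ ≃ List Bool where
  toFun := wordOfGaps
  invFun := gapsOfWord
  left_inv := gapsOfWord_wordOfGaps
  right_inv := wordOfGaps_gapsOfWord

theorem prod_map_wordOfGaps {M : Type*} [Monoid M] (a b : M) :
    ∀ x, ((wordOfGaps x).map fun c ↦ bif c then b else a).prod =
      (x.1.map fun i ↦ a ^ i * b).prod * a ^ x.2
  | ([], g) => by simp [wordOfGaps, map_replicate]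
  | (i :: l, g) => by
    simp [wordOfGaps_cons, map_replicate, prod_map_wordOfGaps a b (l, g), mul_assoc]

end Gaps

/-- For `n × n` matrices `A`, `B` over `ℝ≥0∞`, `(A + B)* = (A* B)* A*`. -/
theorem closure_add (n : ℕ) (A B : Matrix (Fin n) (Fin n) ℝ≥0∞) :
    matrixClosure (A + B) =
      matrixClosure (matrixClosure A * B) * matrixClosure A := by
  have hAB : A + B = ∑' c : Bool, bif c then B else A := by simp [add_comm]
  have hAstarB : matrixClosure A * B = ∑' i : ℕ, A ^ i * B := ENNReal.matrix_tsum_mul _ _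
  calc matrixClosure (A + B)
      = ∑' w : List Bool, (w.map fun c ↦ bif c then B else A).prod := by
        rw [hAB, ENNReal.matrixClosure_tsum]
    _ = ∑' x : List ℕ × ℕ, (x.1.map fun i ↦ A ^ i * B).prod * A ^ x.2 := by
        simp only [← gapsEquivWord.tsum_eq, gapsEquivWord, Equiv.coe_fn_mk, prod_map_wordOfGaps]
    _ = ∑' l : List ℕ, (l.map fun i ↦ A ^ i * B).prod * matrixClosure A := by
        simp only [ENNReal.matrix_tsum_prod, matrixClosure, ENNReal.matrix_mul_tsum]
    _ = matrixClosure (matrixClosure A * B) * matrixClosure A := by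
        rw [hAstarB, ENNReal.matrixClosure_tsum, ENNReal.matrix_tsum_mul]
end
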